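/- arXiv:2410.10055 — 10 statements merged into one kernel-verified Lean document; each statement's English description precedes it below -/
import Mathlib

section
/- Let 𝔽 be a field, let T : V → W be a linear map of 𝔽-vector spaces, and let A ⊆ B ⊆ V and C ⊆ D ⊆ W be subspaces. If Y ⊆ W is a subspace such that T(B) ∩ D = (T(A) ∩ D + T(B) ∩ C) ⊕ Y (i.e. T(B) ∩ D is the sum of T(A) ∩ D + T(B) ∩ C and Y, and these two subspaces intersect trivially), then there exists a subspace X ⊆ V such that T restricts to a linear isomorphism from X onto Y and B ∩ T⁻¹(D) = (A ∩ T⁻¹(D) + B ∩ T⁻¹(C)) ⊕ X. -/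
open Submodule

/-- Lemma: image/inverse-image complements, part 1.
If `T : V → W` is linear, `A ⊆ B ⊆ V`, `C ⊆ D ⊆ W` are subspaces, and
`Y ⊆ W` satisfies `T(B) ∩ D = (T(A) ∩ D + T(B) ∩ C) ⊕ Y`, then there is a
subspace `X ⊆ V` such that `T` restricts to a linear isomorphism of `X` onto
`Y` (i.e. `T(X) = Y` and `T` is injective on `X`) and
`B ∩ T⁻¹(D) = (A ∩ T⁻¹(D) + B ∩ T⁻¹(C)) ⊕ X`. -/
theorem stmt0 {𝔽 V W : Type*} [Field 𝔽] [AddCommGroup V] [Module 𝔽 V]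
    [AddCommGroup W] [Module 𝔽 W] (T : V →ₗ[𝔽] W)
    (A B : Submodule 𝔽 V) (C D : Submodule 𝔽 W)
    (hAB : A ≤ B) (hCD : C ≤ D) (Y : Submodule 𝔽 W)
    (hsum : map T B ⊓ D = (map T A ⊓ D ⊔ map T B ⊓ C) ⊔ Y)
    (hdisj : (map T A ⊓ D ⊔ map T B ⊓ C) ⊓ Y = ⊥) :
    ∃ X : Submodule 𝔽 V,
      map T X = Y ∧ (∀ x ∈ X, T x = 0 → x = 0) ∧
      B ⊓ comap T D = (A ⊓ comap T D ⊔ B ⊓ comap T C) ⊔ X ∧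
      (A ⊓ comap T D ⊔ B ⊓ comap T C) ⊓ X = ⊥ := by
  have hYB : Y ≤ map T B ⊓ D := by rw [hsum]; exact le_sup_right
  have hYD : Y ≤ D := hYB.trans inf_le_right
  set M : Submodule 𝔽 V := B ⊓ comap T Y with hM
  -- restriction of T to M with codomain Y
  set φ : ↥M →ₗ[𝔽] ↥Y := (T.domRestrict M).codRestrict Y (fun x => x.2.2) with hφ
  have hφval : ∀ x : ↥M, (φ x : W) = T (x : V) := fun x => rfl
  have hφsurj : Function.Surjective φ := by
    rintro ⟨y, hy⟩
    obtain ⟨⟨b, hbB, hbT⟩, -⟩ := hYB hy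
    refine ⟨⟨b, hbB, by simpa [mem_comap, hbT] using hy⟩, ?_⟩
    apply Subtype.ext
    simpa [hφval] using hbT
  obtain ⟨σ, hσ⟩ := φ.exists_rightInverse_of_surjective (LinearMap.range_eq_top.2 hφsurj)
  have hσid : ∀ y : ↥Y, φ (σ y) = y := fun y => by
    have := congrArg (fun f => f y) hσ; simpa using this
  set X : Submodule 𝔽 V := LinearMap.range (M.subtype ∘ₗ σ) with hX
  have hXmem : ∀ x ∈ X, ∃ y : ↥Y, ((σ y : ↥M) : V) = x := by
    rintro x ⟨y, rfl⟩; exact ⟨y, rfl⟩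
  have hTX : ∀ y : ↥Y, T ((σ y : ↥M) : V) = (y : W) := fun y => by
    rw [← hφval, hσid]
  have hXB : X ≤ B := by rintro x ⟨y, rfl⟩; exact (σ y).2.1
  -- map T X = Y
  have hmap : map T X = Y := by
    apply le_antisymm
    · rintro w ⟨x, hx, rfl⟩
      obtain ⟨y, rfl⟩ := hXmem x hx
      rw [hTX]; exact y.2
    · intro y hy
      exact ⟨(σ ⟨y, hy⟩ : ↥M), ⟨⟨y, hy⟩, rfl⟩, hTX ⟨y, hy⟩⟩
  -- injectivity on X
  have hinj : ∀ x ∈ X, T x = 0 → x = 0 := by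
    intro x hx hTx
    obtain ⟨y, rfl⟩ := hXmem x hx
    have : (y : W) = 0 := by rw [← hTX y, hTx]
    have : y = 0 := Subtype.ext this
    simp [this]
  refine ⟨X, hmap, hinj, ?_, ?_⟩
  · apply le_antisymm
    · rintro v ⟨hvB, hvD⟩
      have hTv : T v ∈ (map T A ⊓ D ⊔ map T B ⊓ C) ⊔ Y := by
        rw [← hsum]; exact ⟨⟨v, hvB, rfl⟩, hvD⟩
      obtain ⟨p, hp, yw, hyw, hpy⟩ := mem_sup.1 hTv
      obtain ⟨a, ha, c, hc, hac⟩ := mem_sup.1 hp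
      obtain ⟨a', haA, haT⟩ := ha.1
      obtain ⟨c', hcB, hcT⟩ := hc.1
      set x : V := ((σ ⟨yw, hyw⟩ : ↥M) : V) with hxdef
      have hxX : x ∈ X := ⟨⟨yw, hyw⟩, rfl⟩
      have hTx : T x = yw := hTX ⟨yw, hyw⟩
      set z : V := v - a' - c' - x with hz
      have hTz : T z = 0 := by
        simp only [hz, map_sub, hTx, haT, hcT]
        rw [← hpy, ← hac]; abel
      have hzB : z ∈ B := by
        exact sub_mem (sub_mem (sub_mem hvB (hAB haA)) hcB) (hXB hxX)
      have hveq : v = a' + (c' + z) + x := by rw [hz]; abel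
      rw [hveq]
      refine add_mem (mem_sup_left (mem_sup.2 ⟨a', ⟨haA, ?_⟩, c' + z,
        ⟨add_mem hcB hzB, ?_⟩, rfl⟩)) (mem_sup_right hxX)
      · simpa [mem_comap, haT] using ha.2
      · simpa [mem_comap, map_add, hcT, hTz] using hc.2
    · refine sup_le (sup_le ?_ ?_) ?_
      · exact inf_le_inf_left _ (fun v hv => hv) |>.trans (inf_le_inf_right _ hAB)
      · exact inf_le_inf_left B (comap_mono hCD)
      · intro x hx
        refine ⟨hXB hx, ?_⟩
        obtain ⟨y, rfl⟩ := hXmem x hx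
        simpa [mem_comap, hTX y] using hYD y.2
  · rw [eq_bot_iff]
    rintro v ⟨hvS, hvX⟩
    have hTvY : T v ∈ Y := by rw [← hmap]; exact ⟨v, hvX, rfl⟩
    have hTvS : T v ∈ map T A ⊓ D ⊔ map T B ⊓ C := by
      obtain ⟨p, hp, q, hq, rfl⟩ := mem_sup.1 hvS
      rw [map_add]
      exact add_mem (mem_sup_left ⟨⟨p, hp.1, rfl⟩, hp.2⟩)
        (mem_sup_right ⟨⟨q, hq.1, rfl⟩, hq.2⟩)
    have : T v = 0 := by
      have := hdisj ▸ (mem_inf.2 ⟨hTvS, hTvY⟩ : T v ∈ _)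
      simpa using this
    simpa using hinj v hvX this
end

section
/- Let 𝔽 be a field, let T : V → W be a linear map of 𝔽-vector spaces, and let A ⊆ B ⊆ V and C ⊆ D ⊆ W be subspaces. If X ⊆ V is a subspace such that B ∩ T⁻¹(D) = (A ∩ T⁻¹(D) + B ∩ T⁻¹(C)) ⊕ X (i.e. B ∩ T⁻¹(D) is the sum of A ∩ T⁻¹(D) + B ∩ T⁻¹(C) and X, and these two subspaces intersect trivially), then there exists a subspace Y ⊆ W such that T restricts to a linear isomorphism from X onto Y and T(B) ∩ D = (T(A) ∩ D + T(B) ∩ C) ⊕ Y. -/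
open Submodule

/-- Lemma: image/inverse-image complements, part 2.
If `T : V → W` is linear, `A ⊆ B ⊆ V`, `C ⊆ D ⊆ W` are subspaces, and
`X ⊆ V` satisfies `B ∩ T⁻¹(D) = (A ∩ T⁻¹(D) + B ∩ T⁻¹(C)) ⊕ X`, then there is
a subspace `Y ⊆ W` such that `T` restricts to a linear isomorphism of `X` onto
`Y` (i.e. `T(X) = Y` and `T` is injective on `X`) and
`T(B) ∩ D = (T(A) ∩ D + T(B) ∩ C) ⊕ Y`. -/
theorem stmt1 {𝔽 V W : Type*} [Field 𝔽] [AddCommGroup V] [Module 𝔽 V]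
    [AddCommGroup W] [Module 𝔽 W] (T : V →ₗ[𝔽] W)
    (A B : Submodule 𝔽 V) (C D : Submodule 𝔽 W)
    (hAB : A ≤ B) (hCD : C ≤ D) (X : Submodule 𝔽 V)
    (hsum : B ⊓ comap T D = (A ⊓ comap T D ⊔ B ⊓ comap T C) ⊔ X)
    (hdisj : (A ⊓ comap T D ⊔ B ⊓ comap T C) ⊓ X = ⊥) :
    ∃ Y : Submodule 𝔽 W,
      map T X = Y ∧ (∀ x ∈ X, T x = 0 → x = 0) ∧
      map T B ⊓ D = (map T A ⊓ D ⊔ map T B ⊓ C) ⊔ Y ∧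
      (map T A ⊓ D ⊔ map T B ⊓ C) ⊓ Y = ⊥ := by
  have hX : X ≤ B ⊓ comap T D := hsum ▸ le_sup_right
  have hinj : ∀ x ∈ X, T x = 0 → x = 0 := by
    intro x hx hTx
    have hxB : x ∈ B := (hX hx).1
    have hxL : x ∈ (A ⊓ comap T D ⊔ B ⊓ comap T C) :=
      mem_sup_right ⟨hxB, by simp [mem_comap, hTx]⟩
    have : x ∈ (A ⊓ comap T D ⊔ B ⊓ comap T C) ⊓ X := ⟨hxL, hx⟩
    simpa [hdisj] using this
  refine ⟨map T X, rfl, hinj, le_antisymm ?_ ?_, ?_⟩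
  · rintro w ⟨⟨b, hb, rfl⟩, hbD⟩
    have hbX : b ∈ (A ⊓ comap T D ⊔ B ⊓ comap T C) ⊔ X := hsum ▸ ⟨hb, hbD⟩
    obtain ⟨u, hu, x, hx, rfl⟩ := mem_sup.1 hbX
    obtain ⟨a, ha, c, hc, rfl⟩ := mem_sup.1 hu
    rw [map_add, map_add]
    exact add_mem (add_mem
      (mem_sup_left (mem_sup_left ⟨mem_map_of_mem ha.1, ha.2⟩))
      (mem_sup_left (mem_sup_right ⟨mem_map_of_mem hc.1, hc.2⟩)))
      (mem_sup_right (mem_map_of_mem hx))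
  · refine sup_le (sup_le ?_ ?_) ?_
    · exact inf_le_inf (map_mono hAB) le_rfl
    · exact inf_le_inf le_rfl hCD
    · rintro w ⟨x, hx, rfl⟩
      exact ⟨⟨x, (hX hx).1, rfl⟩, (hX hx).2⟩
  · refine (eq_bot_iff).2 ?_
    rintro w ⟨hwL, ⟨x, hx, rfl⟩⟩
    obtain ⟨u, hu, v, hv, huv⟩ := mem_sup.1 hwL
    obtain ⟨a, ha, haD⟩ := hu.1
    obtain ⟨b, hb, hbC⟩ := hv.1
    set z := x - a - b with hz
    have hTz : T z = 0 := by
      simp only [hz, map_sub, haD, hbC, ← huv]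
      abel
    have hzL : z ∈ (A ⊓ comap T D ⊔ B ⊓ comap T C) :=
      mem_sup_right ⟨sub_mem (sub_mem (hX hx).1 (hAB ha)) hb, by simp [mem_comap, hTz]⟩
    have haL : a ∈ (A ⊓ comap T D ⊔ B ⊓ comap T C) :=
      mem_sup_left ⟨ha, mem_comap.2 (haD ▸ hu.2)⟩
    have hbL : b ∈ (A ⊓ comap T D ⊔ B ⊓ comap T C) :=
      mem_sup_right ⟨hb, mem_comap.2 (hbC ▸ hv.2)⟩
    have hxL : x ∈ (A ⊓ comap T D ⊔ B ⊓ comap T C) := by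
      have : x = z + a + b := by simp [hz]; abel
      rw [this]; exact add_mem (add_mem hzL haL) hbL
    have hx0 : x = 0 := by
      have : x ∈ (A ⊓ comap T D ⊔ B ⊓ comap T C) ⊓ X := ⟨hxL, hx⟩
      simpa [hdisj] using this
    simp [hx0]
end

section
/- Let R be a ring, M an R-module, I a totally ordered set, and (F, I) a linear filtration of M. Then every almost gradation C of F is independent: whenever p₁, …, pₙ are distinct elements of I and c_{p₁} + … + c_{pₙ} = 0 with c_{pᵢ} ∈ C_{pᵢ}, one has c_{pᵢ} = 0 for all i. -/
/-- Every almost gradation of a linear filtration is independent.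
Let `(F, I)` be a linear filtration of an `R`-module `M` (so `I` is totally
ordered, `F` is order-preserving and `F p = M` for some `p`), and let `C` be an
almost gradation of `F`, i.e. `F p = F_{<p} ⊕ C p` for all `p`, where
`F_{<p} = Σ_{q<p} F q`. Then `C` is independent: if `p₁, …, pₙ` are distinct
and `c_{p₁} + … + c_{pₙ} = 0` with `c_{pᵢ} ∈ C pᵢ`, then every `c_{pᵢ} = 0`. -/
theorem stmt2 {R M : Type*} [Ring R] [AddCommGroup M] [Module R M]
    {I : Type*} [LinearOrder I] (F : I → Submodule R M)
    (hmono : Monotone F) (htop : ∃ p, F p = ⊤)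
    (C : I → Submodule R M)
    (hag : ∀ p, F p = (⨆ q < p, F q) ⊔ C p ∧ (⨆ q < p, F q) ⊓ C p = ⊥)
    (s : Finset I) (c : I → M) (hc : ∀ p ∈ s, c p ∈ C p)
    (hsum : ∑ p ∈ s, c p = 0) :
    ∀ p ∈ s, c p = 0 := by
  classical
  revert hc hsum
  induction s using Finset.strongInduction with
  | _ s ih =>
    intro hc hsum p hp
    have hne : s.Nonempty := ⟨p, hp⟩
    set m := s.max' hne with hmdef
    have hm : m ∈ s := s.max'_mem hne
    have hCle : ∀ q, C q ≤ F q := fun q => (hag q).1 ▸ le_sup_right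
    have hrest : ∑ q ∈ s.erase m, c q ∈ ⨆ q < m, F q := by
      apply Submodule.sum_mem
      intro q hq
      have hq' := Finset.mem_erase.mp hq
      have hlt : q < m := lt_of_le_of_ne (s.le_max' q hq'.2) hq'.1
      exact Submodule.mem_iSup_of_mem q
        (Submodule.mem_iSup_of_mem hlt (hCle q (hc q hq'.2)))
    have heq : c m + ∑ q ∈ s.erase m, c q = 0 := by
      rw [Finset.add_sum_erase s c hm, hsum]
    have hcm : c m = 0 := by
      have h2 : c m ∈ ⨆ q < m, F q := by
        have : c m = - ∑ q ∈ s.erase m, c q := by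
          rw [eq_neg_iff_add_eq_zero]; exact heq
        rw [this]; exact neg_mem hrest
      have hb : c m ∈ (⊥ : Submodule R M) :=
        (hag m).2 ▸ Submodule.mem_inf.mpr ⟨h2, hc m hm⟩
      simpa using hb
    have hsum' : ∑ q ∈ s.erase m, c q = 0 := by
      rw [hcm, zero_add] at heq; exact heq
    by_cases hpm : p = m
    · rw [hpm]; exact hcm
    · exact ih (s.erase m) (Finset.erase_ssubset hm)
        (fun q hq => hc q (Finset.mem_of_mem_erase hq)) hsum' p
        (Finset.mem_erase.mpr ⟨hpm, hp⟩)
end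

section
/- Let R be a ring, M an R-module, I and J totally ordered sets, and (E, I), (F, J) two linear filtrations of M. Then for every i ∈ I and j ∈ J one has (E ∩ F)_{<(i,j)} = E_i ∩ F_{<j} + E_{<i} ∩ F_j, where (E ∩ F)_{<(i,j)} = Σ_{(p,q) < (i,j)} E_p ∩ F_q is taken with respect to the product order on I × J. -/
/-- Let `(E, I)` and `(F, J)` be linear filtrations of an `R`-module `M`.  For
every `i ∈ I`, `j ∈ J` one has
`(E ∩ F)_{<(i,j)} = E i ∩ F_{<j} + E_{<i} ∩ F j`, where
`(E ∩ F)_{<(i,j)} = Σ_{(p,q) < (i,j)} E p ∩ F q` with the product order on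
`I × J`, and `F_{<j} = Σ_{q<j} F q`, `E_{<i} = Σ_{p<i} E p`. -/
theorem stmt3 {R M : Type*} [Ring R] [AddCommGroup M] [Module R M]
    {I J : Type*} [LinearOrder I] [LinearOrder J]
    (E : I → Submodule R M) (F : J → Submodule R M)
    (hEmono : Monotone E) (hEtop : ∃ p, E p = ⊤)
    (hFmono : Monotone F) (hFtop : ∃ q, F q = ⊤)
    (i : I) (j : J) :
    (⨆ pq : I × J, ⨆ _ : pq < (i, j), E pq.1 ⊓ F pq.2)
      = E i ⊓ (⨆ q < j, F q) ⊔ (⨆ p < i, E p) ⊓ F j := by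
  apply le_antisymm
  · apply iSup_le
    rintro ⟨p, q⟩
    apply iSup_le
    intro hlt
    rcases Prod.lt_iff.mp hlt with ⟨h1, h2⟩ | ⟨h1, h2⟩
    · exact le_sup_of_le_right (inf_le_inf (le_iSup₂_of_le p h1 le_rfl) (hFmono h2))
    · exact le_sup_of_le_left (inf_le_inf (hEmono h1) (le_iSup₂_of_le q h2 le_rfl))
  · apply sup_le
    · intro x hx
      obtain ⟨hx1, hx2⟩ := hx
      rw [iSup_subtype'] at hx2
      rcases isEmpty_or_nonempty {q // q < j} with hE | hN
      · rw [iSup_of_empty] at hx2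
        simp only [Submodule.bot_coe, Set.mem_singleton_iff] at hx2
        subst hx2; exact zero_mem _
      · obtain ⟨⟨q, hq⟩, hxq⟩ := (Submodule.mem_iSup_of_directed _
          ((hFmono.comp (Subtype.mono_coe _)).directed_le)).mp hx2
        exact Submodule.mem_iSup_of_mem (i, q)
          (Submodule.mem_iSup_of_mem (Prod.mk_lt_mk_iff_right.mpr hq) ⟨hx1, hxq⟩)
    · intro x hx
      obtain ⟨hx1, hx2⟩ := hx
      rw [iSup_subtype'] at hx1
      rcases isEmpty_or_nonempty {p // p < i} with hE | hN
      · rw [iSup_of_empty] at hx1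
        simp only [Submodule.bot_coe, Set.mem_singleton_iff] at hx1
        subst hx1; exact zero_mem _
      · obtain ⟨⟨p, hp⟩, hxp⟩ := (Submodule.mem_iSup_of_directed _
          ((hEmono.comp (Subtype.mono_coe _)).directed_le)).mp hx1
        exact Submodule.mem_iSup_of_mem (p, j)
          (Submodule.mem_iSup_of_mem (Prod.mk_lt_mk_iff_left.mpr hp) ⟨hxp, hx2⟩)
end

section
/- Let R be a ring, M an R-module, I and J totally ordered sets, and (E, I), (F, J) two linear filtrations of M. Then every almost gradation C of the intersection filtration (E ∩ F, I × J) is independent: whenever (p₁,q₁), …, (pₙ,qₙ) are distinct elements of I × J and c₁ + … + cₙ = 0 with cᵢ ∈ C_{(pᵢ,qᵢ)}, one has cᵢ = 0 for all i. -/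
/-- Every almost gradation of the intersection of two linear
filtrations is independent.  Let `(E, I)` and `(F, J)` be linear filtrations
of an `R`-module `M`, and let `C` be an almost gradation of the intersection
filtration `(E ∩ F, I × J)` (with the product order), i.e. for every
`x ∈ I × J`, `E x.1 ⊓ F x.2 = (E ∩ F)_{<x} ⊕ C x`.  Then `C` is independent:
if `x₁, …, xₙ ∈ I × J` are distinct and `c₁ + … + cₙ = 0` with `cᵢ ∈ C xᵢ`,
then every `cᵢ = 0`. -/
theorem stmt4 {R M : Type*} [Ring R] [AddCommGroup M] [Module R M]
    {I J : Type*} [LinearOrder I] [LinearOrder J]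
    (E : I → Submodule R M) (F : J → Submodule R M)
    (hEmono : Monotone E) (hEtop : ∃ p, E p = ⊤)
    (hFmono : Monotone F) (hFtop : ∃ q, F q = ⊤)
    (C : I × J → Submodule R M)
    (hag : ∀ x : I × J,
      E x.1 ⊓ F x.2 = (⨆ y < x, E y.1 ⊓ F y.2) ⊔ C x ∧
      (⨆ y < x, E y.1 ⊓ F y.2) ⊓ C x = ⊥)
    (s : Finset (I × J)) (c : I × J → M) (hc : ∀ x ∈ s, c x ∈ C x)
    (hsum : ∑ x ∈ s, c x = 0) :
    ∀ x ∈ s, c x = 0 := by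
  classical
  revert hc hsum
  induction s using Finset.strongInduction with
  | _ s ih =>
    intro hc hsum
    rcases s.eq_empty_or_nonempty with rfl | hne
    · simp
    obtain ⟨x, hxs, hxmax⟩ :=
      s.exists_max_image (fun y => (toLex y : Lex (I × J))) hne
    set t := s.erase x with ht
    have hsplit : c x + ∑ y ∈ t, c y = 0 := by
      rw [ht, Finset.add_sum_erase _ _ hxs]; exact hsum
    set A := t.filter (fun y => y.1 = x.1) with hA
    set B := t.filter (fun y => ¬ y.1 = x.1) with hB
    have hAB : ∑ y ∈ A, c y + ∑ y ∈ B, c y = ∑ y ∈ t, c y :=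
      Finset.sum_filter_add_sum_filter_not t _ c
    set G := (⨆ y < x, E y.1 ⊓ F y.2) with hG
    have hCle : ∀ y, C y ≤ E y.1 ⊓ F y.2 := fun y => (hag y).1 ▸ le_sup_right
    have hleG : ∀ y : I × J, y < x → E y.1 ⊓ F y.2 ≤ G := by
      intro y hy
      exact le_iSup₂_of_le y hy le_rfl
    have hyltx : ∀ y ∈ A, y < x := by
      intro y hy
      rw [hA, Finset.mem_filter] at hy
      have hyne : y ≠ x := Finset.ne_of_mem_erase hy.1
      have hle := hxmax y (Finset.mem_of_mem_erase hy.1)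
      rw [Prod.Lex.le_iff] at hle
      rcases hle with h | h
      · exact absurd hy.2 (ne_of_lt h)
      · exact lt_of_le_of_ne (Prod.le_def.mpr ⟨le_of_eq hy.2, h.2⟩) hyne
    have hsumA : ∑ y ∈ A, c y ∈ G := by
      apply Submodule.sum_mem
      intro y hy
      have hmem : c y ∈ E y.1 ⊓ F y.2 :=
        hCle y (hc y (Finset.mem_of_mem_erase (Finset.mem_filter.mp hy).1))
      exact hleG y (hyltx y hy) hmem
    have hsumB : ∑ y ∈ B, c y ∈ G := by
      rcases B.eq_empty_or_nonempty with hBe | hBne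
      · rw [hBe]; simpa using (Submodule.zero_mem G)
      obtain ⟨z, hzB, hzmax⟩ := B.exists_max_image (fun y => y.1) hBne
      have hzlt : ∀ y ∈ B, y.1 < x.1 := by
        intro y hy
        rw [hB, Finset.mem_filter] at hy
        have hle := hxmax y (Finset.mem_of_mem_erase hy.1)
        rw [Prod.Lex.le_iff] at hle
        rcases hle with h | h
        · exact h
        · exact absurd h.1 hy.2
      have hEmem : ∑ y ∈ B, c y ∈ E z.1 := by
        apply Submodule.sum_mem
        intro y hy
        have hmem : c y ∈ E y.1 ⊓ F y.2 :=
          hCle y (hc y (Finset.mem_of_mem_erase (Finset.mem_filter.mp hy).1))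
        exact hEmono (hzmax y hy) hmem.1
      have hFmem : ∑ y ∈ B, c y ∈ F x.2 := by
        have h0 : (c x + ∑ y ∈ A, c y) + ∑ y ∈ B, c y = 0 := by
          rw [add_assoc, hAB]; exact hsplit
        have hBeq : ∑ y ∈ B, c y = -(c x + ∑ y ∈ A, c y) :=
          eq_neg_of_add_eq_zero_right h0
        rw [hBeq]
        apply Submodule.neg_mem
        apply Submodule.add_mem
        · exact (hCle x (hc x hxs)).2
        · apply Submodule.sum_mem
          intro y hy
          have hmem : c y ∈ E y.1 ⊓ F y.2 :=
            hCle y (hc y (Finset.mem_of_mem_erase (Finset.mem_filter.mp hy).1))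
          exact hFmono (le_of_lt (hyltx y hy)).2 hmem.2
      have hzx : ((z.1, x.2) : I × J) < x := by
        refine lt_of_le_of_ne (Prod.le_def.mpr ⟨le_of_lt (hzlt z hzB), le_rfl⟩) ?_
        intro h
        exact absurd (congrArg Prod.fst h) (ne_of_lt (hzlt z hzB))
      exact hleG (z.1, x.2) hzx ⟨hEmem, hFmem⟩
    have hcxG : c x ∈ G := by
      have hcx : c x = -(∑ y ∈ A, c y + ∑ y ∈ B, c y) := by
        rw [hAB]; exact eq_neg_of_add_eq_zero_left hsplit
      rw [hcx]
      exact Submodule.neg_mem _ (Submodule.add_mem _ hsumA hsumB)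
    have hcx0 : c x = 0 := by
      have hmem : c x ∈ G ⊓ C x := ⟨hcxG, hc x hxs⟩
      rw [hG] at hmem
      rw [(hag x).2] at hmem
      simpa using hmem
    have hts : ∑ y ∈ t, c y = 0 := by
      rw [hcx0, zero_add] at hsplit; exact hsplit
    have hrest := ih t (Finset.erase_ssubset hxs)
      (fun y hy => hc y (Finset.mem_of_mem_erase hy)) hts
    intro y hy
    rcases eq_or_ne y x with rfl | hne
    · exact hcx0
    · exact hrest y (Finset.mem_erase.mpr ⟨hne, hy⟩)
end

section
/- Let 𝔽 be a field, V a finite-dimensional 𝔽-vector space, I a totally ordered set, and (F, I) a linear filtration of V which is closed under intersection. Then every almost gradation C of F spans F, i.e. for every p ∈ I, F_p = Σ_{q ≤ p} C_q. -/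
/-- Almost gradations of intersection-closed linear
filtrations of finite-dimensional spaces span.  Let `V` be a
finite-dimensional vector space over a field `𝔽` and `(F, I)` a linear
filtration of `V` (`I` totally ordered, `F` order-preserving, `F p = V` for
some `p`) which is closed under intersection (for every `A ⊆ I` there is
`i ∈ I` with `i ≤ a` for all `a ∈ A` and `F i = ⋂_{a ∈ A} F a`).  Then every
almost gradation `C` of `F` spans `F`: for every `p`, `F p = Σ_{q ≤ p} C q`. -/
theorem stmt6 {𝔽 V : Type*} [Field 𝔽] [AddCommGroup V] [Module 𝔽 V]
    [FiniteDimensional 𝔽 V] {I : Type*} [LinearOrder I]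
    (F : I → Submodule 𝔽 V) (hmono : Monotone F) (htop : ∃ p, F p = ⊤)
    (hclosed : ∀ A : Set I, ∃ i, (∀ a ∈ A, i ≤ a) ∧ F i = ⨅ a ∈ A, F a)
    (C : I → Submodule 𝔽 V)
    (hag : ∀ p, F p = (⨆ q < p, F q) ⊔ C p ∧ (⨆ q < p, F q) ⊓ C p = ⊥) :
    ∀ p, F p = ⨆ q ≤ p, C q := by
  have hCle : ∀ q, C q ≤ F q := fun q => (hag q).1 ▸ le_sup_right
  have key : ∀ n : ℕ, ∀ p, Module.finrank 𝔽 (F p) ≤ n → F p ≤ ⨆ q ≤ p, C q := by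
    intro n
    induction n using Nat.strong_induction_on with
    | _ n ih =>
      intro p hdim x hx
      obtain ⟨i, hia, hFi⟩ := hclosed {q | x ∈ F q}
      have hip : i ≤ p := hia p hx
      have hxi : x ∈ F i := by
        rw [hFi]
        simp only [Submodule.mem_iInf]
        intro a ha
        exact ha
      have hx' : x ∈ (⨆ q < i, F q) ⊔ C i := (hag i).1 ▸ hxi
      obtain ⟨y, hy, c, hc, hyc⟩ := Submodule.mem_sup.mp hx'
      have hcmem : c ∈ ⨆ q ≤ p, C q := Submodule.mem_iSup_of_mem i (Submodule.mem_iSup_of_mem hip hc)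
      have hymem : y ∈ ⨆ q ≤ p, C q := by
        by_cases hne : ∃ q, q < i
        · have hnonempty : Nonempty {q // q < i} := ⟨⟨hne.choose, hne.choose_spec⟩⟩
          have hdir : Directed (· ≤ ·) (fun q : {q // q < i} => F q.1) := by
            intro a b
            rcases le_total a.1 b.1 with h | h
            · exact ⟨b, hmono h, le_rfl⟩
            · exact ⟨a, le_rfl, hmono h⟩
          rw [iSup_subtype'] at hy
          obtain ⟨⟨j, hj⟩, hyj⟩ := (Submodule.mem_iSup_of_directed _ hdir).mp hy
          have hxj : x ∉ F j := fun hmem => absurd hj (not_lt.mpr (hia j hmem))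
          have hlt : F j < F p :=
            lt_of_le_of_ne (hmono (hj.le.trans hip)) (fun h => hxj (h ▸ hx))
          have hrank : Module.finrank 𝔽 (F j) < n :=
            lt_of_lt_of_le (Submodule.finrank_lt_finrank_of_lt hlt) hdim
          have hyj' : y ∈ ⨆ q ≤ j, C q := ih _ hrank j le_rfl hyj
          exact biSup_mono (fun q (hq : q ≤ j) => hq.trans (hj.le.trans hip)) (f := C) hyj'
        · push_neg at hne
          have hbot : (⨆ q < i, F q) = ⊥ := by
            simp only [iSup_eq_bot]
            intro q
            exact fun hq => absurd hq (not_lt.mpr (hne q))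
          rw [hbot] at hy
          simp only [Submodule.mem_bot] at hy
          simp [hy]
      rw [← hyc]
      exact Submodule.add_mem _ hymem hcmem
  intro p
  refine le_antisymm (key _ p le_rfl) ?_
  exact iSup_le fun q => iSup_le fun hq => (hCle q).trans (hmono hq)
end

section
/- Let 𝔽 be a field, V a finite-dimensional 𝔽-vector space, I and J totally ordered sets, and (E, I), (F, J) linear filtrations of V which are both closed under intersection. Then every almost gradation C of the intersection filtration (E ∩ F, I × J) spans it, i.e. for every (i,j) ∈ I × J, E_i ∩ F_j = Σ_{(p,q) ≤ (i,j)} C_{(p,q)}. -/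
/-- Corollary: almost gradations of intersections of
intersection-closed linear filtrations of finite-dimensional spaces span.
Let `V` be a finite-dimensional vector space over a field `𝔽`, and let
`(E, I)`, `(F, J)` be linear filtrations of `V`, both closed under
intersection.  Then every almost gradation `C` of the intersection filtration
`(E ∩ F, I × J)` (product order) spans it: for every `(i, j)`,
`E i ∩ F j = Σ_{(p,q) ≤ (i,j)} C (p,q)`. -/
theorem stmt7 {𝔽 V : Type*} [Field 𝔽] [AddCommGroup V] [Module 𝔽 V]
    [FiniteDimensional 𝔽 V] {I J : Type*} [LinearOrder I] [LinearOrder J]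
    (E : I → Submodule 𝔽 V) (F : J → Submodule 𝔽 V)
    (hEmono : Monotone E) (hEtop : ∃ p, E p = ⊤)
    (hFmono : Monotone F) (hFtop : ∃ q, F q = ⊤)
    (hEclosed : ∀ A : Set I, ∃ i, (∀ a ∈ A, i ≤ a) ∧ E i = ⨅ a ∈ A, E a)
    (hFclosed : ∀ A : Set J, ∃ j, (∀ a ∈ A, j ≤ a) ∧ F j = ⨅ a ∈ A, F a)
    (C : I × J → Submodule 𝔽 V)
    (hag : ∀ x : I × J,
      E x.1 ⊓ F x.2 = (⨆ y < x, E y.1 ⊓ F y.2) ⊔ C x ∧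
      (⨆ y < x, E y.1 ⊓ F y.2) ⊓ C x = ⊥) :
    ∀ x : I × J, E x.1 ⊓ F x.2 = ⨆ y ≤ x, C y := by
  have hCle : ∀ y : I × J, C y ≤ E y.1 ⊓ F y.2 := fun y => by
    rw [(hag y).1]; exact le_sup_right
  have hGmono : ∀ {y x : I × J}, y ≤ x → E y.1 ⊓ F y.2 ≤ E x.1 ⊓ F x.2 :=
    fun h => inf_le_inf (hEmono h.1) (hFmono h.2)
  have main : ∀ n : ℕ, ∀ x : I × J,
      Module.finrank 𝔽 (E x.1 ⊓ F x.2 : Submodule 𝔽 V) ≤ n →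
      E x.1 ⊓ F x.2 ≤ ⨆ y ≤ x, C y := by
    intro n
    induction n using Nat.strong_induction_on with
    | _ n ih =>
      intro x hx
      obtain ⟨i₀, hi₀le, hi₀eq⟩ := hEclosed {p | E x.1 ⊓ F x.2 ≤ E p}
      obtain ⟨j₀, hj₀le, hj₀eq⟩ := hFclosed {q | E x.1 ⊓ F x.2 ≤ F q}
      set x₀ : I × J := (i₀, j₀) with hx₀def
      have hx₀x : x₀ ≤ x := ⟨hi₀le x.1 (show E x.1 ⊓ F x.2 ≤ E x.1 from inf_le_left),
        hj₀le x.2 (show E x.1 ⊓ F x.2 ≤ F x.2 from inf_le_right)⟩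
      have hGi₀ : E x.1 ⊓ F x.2 ≤ E i₀ := by
        rw [hi₀eq]; exact le_iInf fun a => le_iInf fun ha => ha
      have hGj₀ : E x.1 ⊓ F x.2 ≤ F j₀ := by
        rw [hj₀eq]; exact le_iInf fun a => le_iInf fun ha => ha
      have hGeq : E i₀ ⊓ F j₀ = E x.1 ⊓ F x.2 :=
        le_antisymm (hGmono hx₀x) (le_inf hGi₀ hGj₀)
      have hsmall : ∀ y : I × J, y < x₀ → E y.1 ⊓ F y.2 ≤ ⨆ z ≤ x, C z := by
        intro y hy
        have h1 : E y.1 ⊓ F y.2 ≤ E x.1 ⊓ F x.2 :=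
          le_trans (hGmono hy.le) hGeq.le
        have h2 : E y.1 ⊓ F y.2 ≠ E x.1 ⊓ F x.2 := by
          intro h
          have hle : x₀ ≤ y :=
            ⟨hi₀le y.1 (show E x.1 ⊓ F x.2 ≤ E y.1 from h ▸ inf_le_left),
            hj₀le y.2 (show E x.1 ⊓ F x.2 ≤ F y.2 from h ▸ inf_le_right)⟩
          exact absurd hle (not_le_of_gt hy)
        have hlt : Module.finrank 𝔽 (E y.1 ⊓ F y.2 : Submodule 𝔽 V) <
            Module.finrank 𝔽 (E x.1 ⊓ F x.2 : Submodule 𝔽 V) :=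
          Submodule.finrank_lt_finrank_of_lt (lt_of_le_of_ne h1 h2)
        have hy' := ih (Module.finrank 𝔽 (E y.1 ⊓ F y.2 : Submodule 𝔽 V))
          (by omega) y le_rfl
        refine hy'.trans ?_
        exact iSup₂_le fun z hz => le_iSup₂_of_le z (hz.trans (hy.le.trans hx₀x)) le_rfl
      have hkey : E i₀ ⊓ F j₀ ≤ ⨆ z ≤ x, C z := by
        rw [(hag x₀).1]
        refine sup_le (iSup₂_le hsmall) ?_
        exact le_iSup₂_of_le x₀ hx₀x le_rfl
      exact hGeq ▸ hkey
  intro x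
  refine le_antisymm (main _ x le_rfl) ?_
  exact iSup₂_le fun y hy => (hCle y).trans (hGmono hy)
end

section
/- Let 𝔽 be a field, V an 𝔽-vector space, I and J totally ordered sets, (E, I) and (F, J) linear filtrations of V, and C an almost gradation of the intersection filtration (E ∩ F, I × J). Fix i ∈ I and let π : E_i → E_i / E_{<i} denote the quotient map. Then (1) the function F̄ : J → Sub(E_i / E_{<i}) defined by F̄_j = π(E_i ∩ F_j) is a linear filtration of E_i / E_{<i}, with F̄_{<j} = π(E_i ∩ F_{<j}) for all j ∈ J, and (2) the function C̄ : J → Sub(E_i / E_{<i}) defined by C̄_j = π(C_{(i,j)}) is an almost gradation of F̄. -/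
/-!
Let `π : E_i → E_i / E_{<i}` and `G_{<(i,j)} = Σ_{y < (i,j)} E_{y.1} ∩ F_{y.2}`. For monotone
families indexed by linear orders, `G_{<(i,j)} = (E_{<i} ∩ F_j) + (E_i ∩ F_{<j})`, because in a
compactly generated lattice meets distribute over the directed joins `E_{<i}` and `F_{<j}`.
Since `π` kills `E_{<i}`, this gives `π(G_{<(i,j)}) = F̄_{<j}`, and applying `π` to
`E_i ∩ F_j = G_{<(i,j)} + C_{(i,j)}` gives `F̄_j = F̄_{<j} + C̄_j`. For directness, a common element
of `π(G_{<(i,j)})` and `π(C_{(i,j)})` lifts to some `c ∈ C_{(i,j)}` lying in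
`(E_{<i} + G_{<(i,j)}) ∩ F_j`, which equals `G_{<(i,j)}` by the modular law; hence `c = 0`.
-/

theorem inf_biSup_lt_eq_of_monotone {α ι : Type*} [CompleteLattice α] [IsCompactlyGenerated α]
    [LinearOrder ι] {f : ι → α} (hf : Monotone f) (a : α) (j : ι) :
    a ⊓ ⨆ q < j, f q = ⨆ q < j, a ⊓ f q := by
  rw [iSup_subtype', iSup_subtype']
  exact (hf.comp (Subtype.mono_coe _)).directed_le.inf_iSup_eq

theorem biSup_lt_prodMk_inf_eq {α I J : Type*} [CompleteLattice α] [IsCompactlyGenerated α]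
    [LinearOrder I] [LinearOrder J] {E : I → α} {F : J → α} (hE : Monotone E) (hF : Monotone F)
    (i : I) (j : J) :
    ⨆ y < (i, j), E y.1 ⊓ F y.2 = (⨆ p < i, E p) ⊓ F j ⊔ E i ⊓ ⨆ q < j, F q := by
  apply le_antisymm
  · refine iSup₂_le fun y hy => ?_
    rcases Prod.lt_iff.mp hy with ⟨hi, hj⟩ | ⟨hi, hj⟩
    · exact le_sup_of_le_left (inf_le_inf (le_iSup₂ (f := fun p _ => E p) y.1 hi) (hF hj))
    · exact le_sup_of_le_right (inf_le_inf (hE hi) (le_iSup₂ (f := fun q _ => F q) y.2 hj))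
  · rw [inf_biSup_lt_eq_of_monotone hF, inf_comm, inf_biSup_lt_eq_of_monotone hE]
    refine sup_le (iSup₂_le fun p hp => ?_) (iSup₂_le fun q hq => ?_)
    · exact le_iSup₂_of_le (f := fun y (_ : y < (i, j)) => E y.1 ⊓ F y.2) (p, j)
        (Prod.mk_lt_mk_of_lt_of_le hp le_rfl) (inf_comm _ _).le
    · exact le_iSup₂ (f := fun y (_ : y < (i, j)) => E y.1 ⊓ F y.2) (i, q)
        (Prod.mk_lt_mk_of_le_of_lt le_rfl hq)

theorem Disjoint.sup_left_of_inf_le {α : Type*} [Lattice α] [OrderBot α] [IsModularLattice α]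
    {a b c d : α} (hbc : Disjoint b c) (hb : b ≤ d) (hc : c ≤ d) (ha : a ⊓ d ≤ b) :
    Disjoint (a ⊔ b) c := by
  have hmod : (a ⊔ b) ⊓ d = b := by
    rw [sup_comm, sup_inf_assoc_of_le _ hb, sup_eq_left.mpr ha]
  rw [disjoint_iff, ← inf_eq_right.mpr hc, ← inf_assoc, hmod, hbc.eq_bot]

namespace Submodule

variable {R V : Type*} [Ring R] [AddCommGroup V] [Module R V] (N L : Submodule R V)

theorem comap_subtype_sup_of_le {X Y : Submodule R V} (hX : X ≤ N) (hY : Y ≤ N) :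
    (X ⊔ Y).comap N.subtype = X.comap N.subtype ⊔ Y.comap N.subtype := by
  conv_lhs => rw [← inf_of_le_right hX, ← inf_of_le_right hY, ← map_comap_subtype,
    ← map_comap_subtype, ← map_sup]
  exact comap_map_eq_of_injective N.injective_subtype _

theorem comap_subtype_iSup_of_le {ι : Sort*} {X : ι → Submodule R V} (hX : ∀ k, X k ≤ N) :
    (⨆ k, X k).comap N.subtype = ⨆ k, (X k).comap N.subtype := by
  conv_lhs => rw [iSup_congr fun k => (inf_of_le_right (hX k)).symm]
  simp_rw [← map_comap_subtype, ← map_iSup]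
  exact comap_map_eq_of_injective N.injective_subtype _

/-- `π(N ⊓ P)` for the projection `π : N → N / (N ⊓ L)`; for `N = E_i`, `L = E_{<i}`, `P = F_j`
this is the paper's `F̄_j`. -/
def subquotientImage (P : Submodule R V) : Submodule R (N ⧸ L.comap N.subtype) :=
  (P.comap N.subtype).map (L.comap N.subtype).mkQ

variable {N L}

theorem subquotientImage_mono : Monotone (subquotientImage N L) :=
  fun _ _ h => map_mono (comap_mono h)

@[simp]
theorem subquotientImage_top : subquotientImage N L ⊤ = ⊤ := by
  simp [subquotientImage]

@[simp]
theorem subquotientImage_inf_left (P : Submodule R V) :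
    subquotientImage N L (N ⊓ P) = subquotientImage N L P := by
  simp [subquotientImage, comap_inf]

theorem subquotientImage_eq_bot_of_le {P : Submodule R V} (hP : P ≤ L) :
    subquotientImage N L P = ⊥ := by
  rw [subquotientImage, ← le_bot_iff, map_le_iff_le_comap, comap_bot, ker_mkQ]
  exact comap_mono hP

theorem subquotientImage_sup {P Q : Submodule R V} (hP : P ≤ N) (hQ : Q ≤ N) :
    subquotientImage N L (P ⊔ Q) = subquotientImage N L P ⊔ subquotientImage N L Q := by
  rw [subquotientImage, comap_subtype_sup_of_le N hP hQ, map_sup]; rfl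

theorem subquotientImage_iSup {ι : Sort*} {X : ι → Submodule R V} (hX : ∀ k, X k ≤ N) :
    subquotientImage N L (⨆ k, X k) = ⨆ k, subquotientImage N L (X k) := by
  rw [subquotientImage, comap_subtype_iSup_of_le N hX, map_iSup]; rfl

theorem subquotientImage_biSup_lt {J : Type*} [LinearOrder J] {F : J → Submodule R V}
    (hF : Monotone F) (j : J) :
    subquotientImage N L (⨆ q < j, F q) = ⨆ q < j, subquotientImage N L (F q) := by
  rw [← subquotientImage_inf_left, inf_biSup_lt_eq_of_monotone hF,
    subquotientImage_iSup fun q => iSup_le fun _ => inf_le_left]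
  refine iSup_congr fun q => ?_
  rw [subquotientImage_iSup fun _ => inf_le_left, subquotientImage_inf_left]

theorem disjoint_subquotientImage {P Q : Submodule R V} (h : Disjoint (L ⊔ P) Q) :
    Disjoint (subquotientImage N L P) (subquotientImage N L Q) := by
  rw [disjoint_iff, eq_bot_iff]
  rintro _ ⟨⟨x, hx, rfl⟩, ⟨y, hy, hyx⟩⟩
  have hdiff : (y : V) - x ∈ L := by
    simpa [Submodule.Quotient.eq] using hyx
  have hyP : (y : V) ∈ L ⊔ P := by
    simpa using add_mem (mem_sup_left hdiff) (mem_sup_right hx)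
  have hy0 : y = 0 := Subtype.ext (h.le_bot ⟨hyP, hy⟩)
  simpa [hy0] using hyx.symm

theorem subquotientImage_biSup_lt_prodMk {I J : Type*} [LinearOrder I] [LinearOrder J]
    {E : I → Submodule R V} {F : J → Submodule R V} (hE : Monotone E) (hF : Monotone F)
    (i : I) (j : J) :
    subquotientImage (E i) (⨆ p < i, E p) (⨆ y < (i, j), E y.1 ⊓ F y.2)
      = ⨆ q < j, subquotientImage (E i) (⨆ p < i, E p) (F q) := by
  have hElt : ⨆ p < i, E p ≤ E i := iSup₂_le fun p hp => hE hp.le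
  rw [biSup_lt_prodMk_inf_eq hE hF, subquotientImage_sup (inf_le_left.trans hElt) inf_le_left,
    subquotientImage_eq_bot_of_le inf_le_left, bot_sup_eq, subquotientImage_inf_left,
    subquotientImage_biSup_lt hF]

end Submodule

theorem stmt8_general {𝔽 V : Type*} [Field 𝔽] [AddCommGroup V] [Module 𝔽 V]
    {I J : Type*} [LinearOrder I] [LinearOrder J]
    (E : I → Submodule 𝔽 V) (F : J → Submodule 𝔽 V)
    (hEmono : Monotone E)
    (hFmono : Monotone F) (hFtop : ∃ q, F q = ⊤)
    (C : I × J → Submodule 𝔽 V)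
    (hag : ∀ x : I × J,
      E x.1 ⊓ F x.2 = (⨆ y < x, E y.1 ⊓ F y.2) ⊔ C x ∧
      (⨆ y < x, E y.1 ⊓ F y.2) ⊓ C x = ⊥)
    (i : I) :
    let K : Submodule 𝔽 (E i) := Submodule.comap (E i).subtype (⨆ p < i, E p)
    let π : (E i) →ₗ[𝔽] (E i ⧸ K) := K.mkQ
    let Fbar : J → Submodule 𝔽 (E i ⧸ K) := fun j =>
      Submodule.map π (Submodule.comap (E i).subtype (F j))
    let Cbar : J → Submodule 𝔽 (E i ⧸ K) := fun j =>
      Submodule.map π (Submodule.comap (E i).subtype (C (i, j)))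
    (Monotone Fbar ∧ (∃ j, Fbar j = ⊤) ∧
      (∀ j, (⨆ q < j, Fbar q)
        = Submodule.map π (Submodule.comap (E i).subtype (⨆ q < j, F q)))) ∧
    (∀ j, Fbar j = (⨆ q < j, Fbar q) ⊔ Cbar j ∧
      (⨆ q < j, Fbar q) ⊓ Cbar j = ⊥) := by
  intro K π Fbar Cbar
  refine ⟨⟨fun j j' h => Submodule.subquotientImage_mono (hFmono h), ?_,
    fun j => (Submodule.subquotientImage_biSup_lt hFmono j).symm⟩, fun j => ?_⟩
  · obtain ⟨q, hq⟩ := hFtop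
    exact ⟨q, show Submodule.subquotientImage _ _ _ = ⊤ by rw [hq, Submodule.subquotientImage_top]⟩
  obtain ⟨hsup, hdisj⟩ := hag (i, j)
  set G := ⨆ y < (i, j), E y.1 ⊓ F y.2 with hG_def
  have hFbar_lt : ⨆ q < j, Fbar q = Submodule.subquotientImage (E i) (⨆ p < i, E p) G :=
    (Submodule.subquotientImage_biSup_lt_prodMk hEmono hFmono i j).symm
  have hGle : G ≤ E i ⊓ F j := iSup₂_le fun y hy => inf_le_inf (hEmono hy.le.1) (hFmono hy.le.2)
  have hCle : C (i, j) ≤ E i ⊓ F j := hsup ▸ le_sup_right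
  have hEltF : (⨆ p < i, E p) ⊓ F j ≤ G := by
    rw [hG_def, biSup_lt_prodMk_inf_eq hEmono hFmono]
    exact le_sup_left
  rw [hFbar_lt, ← disjoint_iff]
  refine ⟨?_, Submodule.disjoint_subquotientImage <| (disjoint_iff.mpr hdisj).sup_left_of_inf_le
    (hGle.trans inf_le_right) (hCle.trans inf_le_right) hEltF⟩
  calc Fbar j = Submodule.subquotientImage (E i) _ (E i ⊓ F j) :=
        (Submodule.subquotientImage_inf_left _).symm
    _ = _ := by
      rw [hsup, Submodule.subquotientImage_sup (hGle.trans inf_le_left) (hCle.trans inf_le_left)]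
      rfl

/-- The induced filtration and almost gradation on the
quotient `E i / E_{<i}`.  Let `(E, I)` and `(F, J)` be linear filtrations of
an `𝔽`-vector space `V` and `C` an almost gradation of the intersection
filtration `(E ∩ F, I × J)`.  Fix `i ∈ I`; realize `E_{<i}` inside `E i` as
`K = (E i).subtype ⁻¹ (Σ_{p<i} E p)` and let `π : E i → (E i) / K` be the
quotient map.  Then
(1) `F̄ : j ↦ π(E i ∩ F j)` is a linear filtration of `E i / E_{<i}` with
`F̄_{<j} = π(E i ∩ F_{<j})` for all `j`, and
(2) `C̄ : j ↦ π(C (i,j))` is an almost gradation of `F̄`. -/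
theorem stmt8 {𝔽 V : Type*} [Field 𝔽] [AddCommGroup V] [Module 𝔽 V]
    {I J : Type*} [LinearOrder I] [LinearOrder J]
    (E : I → Submodule 𝔽 V) (F : J → Submodule 𝔽 V)
    (hEmono : Monotone E) (hEtop : ∃ p, E p = ⊤)
    (hFmono : Monotone F) (hFtop : ∃ q, F q = ⊤)
    (C : I × J → Submodule 𝔽 V)
    (hag : ∀ x : I × J,
      E x.1 ⊓ F x.2 = (⨆ y < x, E y.1 ⊓ F y.2) ⊔ C x ∧
      (⨆ y < x, E y.1 ⊓ F y.2) ⊓ C x = ⊥)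
    (i : I) :
    let K : Submodule 𝔽 (E i) := Submodule.comap (E i).subtype (⨆ p < i, E p)
    let π : (E i) →ₗ[𝔽] (E i ⧸ K) := K.mkQ
    let Fbar : J → Submodule 𝔽 (E i ⧸ K) := fun j =>
      Submodule.map π (Submodule.comap (E i).subtype (F j))
    let Cbar : J → Submodule 𝔽 (E i ⧸ K) := fun j =>
      Submodule.map π (Submodule.comap (E i).subtype (C (i, j)))
    (Monotone Fbar ∧ (∃ j, Fbar j = ⊤) ∧
      (∀ j, (⨆ q < j, Fbar q)
        = Submodule.map π (Submodule.comap (E i).subtype (⨆ q < j, F q)))) ∧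
    (∀ j, Fbar j = (⨆ q < j, Fbar q) ⊔ Cbar j ∧
      (⨆ q < j, Fbar q) ⊓ Cbar j = ⊥) :=
  stmt8_general E F hEmono hFmono hFtop C hag i
end

section
/- Let 𝔽 be a field, V a finite-dimensional 𝔽-vector space, I and J totally ordered sets, and (E, I), (F, J) linear filtrations of V with F closed under intersection. Fix i ∈ I and let π : E_i → E_i / E_{<i} denote the quotient map. Then the linear filtration F̄ : J → Sub(E_i / E_{<i}) defined by F̄_j = π(E_i ∩ F_j) is closed under intersection. -/
/-- The induced filtration on the quotient is closed under
intersection.  Let `V` be a finite-dimensional `𝔽`-vector space, `(E, I)`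
and `(F, J)` linear filtrations of `V` with `F` closed under intersection.
Fix `i ∈ I`; realize `E_{<i}` inside `E i` as
`K = (E i).subtype ⁻¹ (Σ_{p<i} E p)` and let `π : E i → (E i) / K` be the
quotient map.  Then the linear filtration `F̄ : j ↦ π(E i ∩ F j)` of
`E i / E_{<i}` is closed under intersection. -/
theorem stmt9 {𝔽 V : Type*} [Field 𝔽] [AddCommGroup V] [Module 𝔽 V]
    [FiniteDimensional 𝔽 V]
    {I J : Type*} [LinearOrder I] [LinearOrder J]
    (E : I → Submodule 𝔽 V) (F : J → Submodule 𝔽 V)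
    (hEmono : Monotone E) (hEtop : ∃ p, E p = ⊤)
    (hFmono : Monotone F) (hFtop : ∃ q, F q = ⊤)
    (hFclosed : ∀ A : Set J, ∃ j, (∀ a ∈ A, j ≤ a) ∧ F j = ⨅ a ∈ A, F a)
    (i : I) :
    let K : Submodule 𝔽 (E i) := Submodule.comap (E i).subtype (⨆ p < i, E p)
    let π : (E i) →ₗ[𝔽] (E i ⧸ K) := K.mkQ
    let Fbar : J → Submodule 𝔽 (E i ⧸ K) := fun j =>
      Submodule.map π (Submodule.comap (E i).subtype (F j))
    ∀ A : Set J, ∃ j, (∀ a ∈ A, j ≤ a) ∧ Fbar j = ⨅ a ∈ A, Fbar a := by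
  intro K π Fbar A
  obtain ⟨j, hj, hFj⟩ := hFclosed A
  refine ⟨j, hj, ?_⟩
  have hFbarmono : Monotone Fbar := fun a b hab =>
    Submodule.map_mono (Submodule.comap_mono (hFmono hab))
  by_cases hA : A.Nonempty
  · -- the chain {F a | a ∈ A} has a least element by Artinian-ness
    obtain ⟨W, ⟨a0, ha0, rfl⟩, hmin⟩ :=
      ((isArtinian_iff 𝔽 V).mp inferInstance).has_min
        {W | ∃ a ∈ A, F a = W} ⟨F hA.choose, hA.choose, hA.choose_spec, rfl⟩
    have hle : ∀ a ∈ A, F a0 ≤ F a := by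
      intro a ha
      rcases le_total a a0 with h | h
      · have h1 : F a ≤ F a0 := hFmono h
        have h2 := hmin (F a) ⟨a, ha, rfl⟩
        rcases h1.lt_or_eq with hlt | he
        · exact absurd hlt h2
        · exact he.ge
      · exact hFmono h
    have hFja0 : F j = F a0 := by
      refine le_antisymm ?_ ?_
      · rw [hFj]; exact biInf_le F ha0
      · rw [hFj]; exact le_iInf₂ hle
    apply le_antisymm
    · refine le_iInf₂ fun a ha => ?_
      exact Submodule.map_mono (Submodule.comap_mono (by rw [hFj]; exact biInf_le F ha))
    · calc ⨅ a ∈ A, Fbar a ≤ Fbar a0 := biInf_le Fbar ha0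
        _ = Fbar j := by simp only [Fbar, hFja0]
  · rw [Set.not_nonempty_iff_eq_empty] at hA
    subst hA
    simp only [Set.mem_empty_iff_false, iInf_false, iInf_top]
    have : F j = ⊤ := by rw [hFj]; simp
    show Submodule.map π (Submodule.comap (E i).subtype (F j)) = ⊤
    rw [this, Submodule.comap_top, Submodule.map_top]
    exact Submodule.range_mkQ K
end

section
/- Let 𝔽 be a field and let V = { (a₀, a₁, …) : aᵢ ∈ 𝔽 } be the vector space of all 𝔽-valued sequences. Let I = ℤ_{≤0} ∪ {−∞} with the usual total order (−∞ below every integer), and define F : I → Sub(V) by F_i = { a ∈ V : a_k = 0 for all 0 ≤ k < −i } for i ∈ ℤ_{≤0} (so F_0 = V) and F_{−∞} = 0. Then (1) F is a linear filtration of V which is closed under intersection, and (2) no almost gradation C of F spans F; in fact for every almost gradation C of F one has Σ_{i ∈ I} C_i ≠ V. -/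
/-- Example: an intersection-closed linear filtration of an
infinite-dimensional space with no spanning almost gradation.
Let `V = 𝔽^ℕ` be the space of all `𝔽`-valued sequences, let
`I = ℤ_{≤0} ∪ {−∞}` (formalized as `WithBot {n : ℤ // n ≤ 0}`), and define
`F : I → Sub(V)` by `F (−∞) = 0` and, for a nonpositive integer `i`,
`F i = { a | a k = 0 for all 0 ≤ k < −i }` (so `F 0 = V`).  Then
(1) `F` is a linear filtration of `V` which is closed under intersection, and
(2) for every almost gradation `C` of `F`: `C` does not span `F`, and in fact
`Σ_{i ∈ I} C i ≠ V`. -/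
theorem stmt10 (𝔽 : Type*) [Field 𝔽] :
    let Idx := WithBot {n : ℤ // n ≤ 0}
    let F : Idx → Submodule 𝔽 (ℕ → 𝔽) := fun x =>
      WithBot.recBotCoe ⊥
        (fun i => ⨅ k : ℕ, ⨅ _ : (k : ℤ) < -(i : ℤ),
          LinearMap.ker (LinearMap.proj (R := 𝔽) (φ := fun _ : ℕ => 𝔽) k)) x
    (Monotone F ∧ (∃ p, F p = ⊤) ∧
      (∀ A : Set Idx, ∃ i, (∀ a ∈ A, i ≤ a) ∧ F i = ⨅ a ∈ A, F a)) ∧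
    (∀ C : Idx → Submodule 𝔽 (ℕ → 𝔽),
      (∀ p, F p = (⨆ q < p, F q) ⊔ C p ∧ (⨆ q < p, F q) ⊓ C p = ⊥) →
      (¬ ∀ p, F p = ⨆ q ≤ p, C q) ∧ (⨆ i, C i) ≠ ⊤) := by
  intro Idx F
  -- membership in F at a coe index
  have hmem : ∀ (i : {n : ℤ // n ≤ 0}) (x : ℕ → 𝔽),
      x ∈ F ↑i ↔ ∀ k : ℕ, (k : ℤ) < -(i : ℤ) → x k = 0 := by
    intro i x
    simp [F, Submodule.mem_iInf, LinearMap.mem_ker]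
  have hFbot : F ⊥ = ⊥ := rfl
  -- monotonicity
  have hFmono : Monotone F := by
    intro p q hpq
    induction p using WithBot.recBotCoe with
    | bot => rw [hFbot]; exact bot_le
    | coe i =>
      induction q using WithBot.recBotCoe with
      | bot => exact absurd (le_bot_iff.mp hpq) WithBot.coe_ne_bot
      | coe j =>
        have hij : (i : ℤ) ≤ (j : ℤ) := Subtype.coe_le_coe.mpr (WithBot.coe_le_coe.mp hpq)
        intro x hx
        rw [hmem] at hx ⊢
        intro k hk
        exact hx k (by omega)
  -- F at 0 is ⊤
  have hF0 : F ((⟨0, le_refl 0⟩ : {n : ℤ // n ≤ 0}) : Idx) = ⊤ := by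
    rw [eq_top_iff]
    intro x _
    rw [hmem]
    intro k hk
    simp at hk
    omega
  refine ⟨⟨hFmono, ⟨_, hF0⟩, ?_⟩, ?_⟩
  · -- closed under intersection
    intro A
    set P : ℤ → Prop := fun n => ∃ h : n ≤ 0, ((⟨n, h⟩ : {n : ℤ // n ≤ 0}) : Idx) ∈ A with hP
    by_cases hA : (⊥ : Idx) ∈ A ∨ ¬∃ b : ℤ, ∀ z, P z → b ≤ z
    · refine ⟨⊥, fun a _ => bot_le, ?_⟩
      rw [hFbot, eq_comm, eq_bot_iff]
      rcases hA with hbot | hub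
      · exact (iInf₂_le ⊥ hbot).trans (le_of_eq hFbot)
      · push_neg at hub
        intro x hx
        simp only [Submodule.mem_bot]
        funext k
        obtain ⟨z, ⟨hz0, hzA⟩, hlt⟩ := hub (-(k : ℤ))
        have hxz : x ∈ F ↑(⟨z, hz0⟩ : {n : ℤ // n ≤ 0}) := by
          exact (Submodule.mem_iInf _).mp ((Submodule.mem_iInf _).mp hx _) hzA
        exact (hmem _ x).mp hxz k (by show (k : ℤ) < -z; omega)
    · push_neg at hA
      obtain ⟨hbot, hbdd⟩ := hA
      by_cases hne : ∃ z, P z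
      · obtain ⟨m, ⟨hm0, hmA⟩, hmin⟩ := Int.exists_least_of_bdd hbdd hne
        have hle : ∀ a ∈ A, ((⟨m, hm0⟩ : {n : ℤ // n ≤ 0}) : Idx) ≤ a := by
          intro a ha
          induction a using WithBot.recBotCoe with
          | bot => exact absurd ha hbot
          | coe n =>
            refine WithBot.coe_le_coe.mpr ?_
            exact Subtype.coe_le_coe.mp (hmin n ⟨n.2, by simpa using ha⟩)
        refine ⟨_, hle, le_antisymm (le_iInf₂ fun a ha => hFmono (hle a ha)) (iInf₂_le _ hmA)⟩
      · -- A is empty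
        have hAe : A = ∅ := by
          ext a
          simp only [Set.mem_empty_iff_false, iff_false]
          intro ha
          induction a using WithBot.recBotCoe with
          | bot => exact hbot ha
          | coe n => exact hne ⟨n.1, n.2, by simpa using ha⟩
        refine ⟨((⟨0, le_refl 0⟩ : {n : ℤ // n ≤ 0}) : Idx), ?_, ?_⟩
        · simp [hAe]
        · rw [hF0, hAe]; simp
  · -- part 2
    intro C hC
    -- C p ≤ F p
    have hCle : ∀ p, C p ≤ F p := fun p => (hC p).1.ge.trans' le_sup_right
    -- every C p is contained in a line
    have hline : ∀ p, ∃ v : ℕ → 𝔽, C p ≤ 𝔽 ∙ v := by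
      intro p
      induction p using WithBot.recBotCoe with
      | bot =>
        exact ⟨0, (hCle ⊥).trans (by rw [hFbot]; exact bot_le)⟩
      | coe i =>
        -- evaluation point
        set n : ℕ := (-(i : ℤ)).toNat with hn
        have hni : (n : ℤ) = -(i : ℤ)  := Int.toNat_of_nonneg (by omega)
        -- key: x ∈ C i and x n = 0 → x = 0
        have hkey : ∀ x ∈ C ↑i, x n = 0 → x = 0 := by
          intro x hx hxn
          -- x ∈ F (i - 1)
          have hi1 : ((i : ℤ) - 1) ≤ 0 := by omega
          have hxF : x ∈ F ↑(⟨(i : ℤ) - 1, hi1⟩ : {n : ℤ // n ≤ 0}) := by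
            rw [hmem]
            intro k hk
            simp only at hk
            rcases lt_or_eq_of_le (show (k : ℤ) ≤ -(i : ℤ) by omega) with h | h
            · exact (hmem i x).mp (hCle _ hx) k h
            · have : k = n := by omega
              rwa [this]
          have hlt : (↑(⟨(i : ℤ) - 1, hi1⟩ : {n : ℤ // n ≤ 0}) : Idx) < ↑i := by
            refine WithBot.coe_lt_coe.mpr ?_
            exact Subtype.mk_lt_mk.mpr (by omega)
          have hxS : x ∈ (⨆ q < (↑i : Idx), F q) := by
            exact (le_iSup₂ (f := fun q (_ : q < (↑i : Idx)) => F q) _ hlt) hxF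
          have : x ∈ (⨆ q < (↑i : Idx), F q) ⊓ C ↑i := ⟨hxS, hx⟩
          rw [(hC ↑i).2] at this
          simpa using this
        by_cases hCz : ∀ x ∈ C ↑i, x = 0
        · exact ⟨0, fun x hx => by rw [hCz x hx]; exact Submodule.zero_mem _⟩
        · push_neg at hCz
          obtain ⟨c, hc, hc0⟩ := hCz
          have hcn : c n ≠ 0 := fun h => hc0 (hkey c hc h)
          refine ⟨c, fun x hx => ?_⟩
          have hy : x - (x n / c n) • c ∈ C ↑i :=
            Submodule.sub_mem _ hx (Submodule.smul_mem _ _ hc)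
          have hy0 : x - (x n / c n) • c = 0 := by
            apply hkey _ hy
            simp [div_mul_cancel₀, hcn]
          have : x = (x n / c n) • c := by
            rw [← sub_eq_zero]; exact hy0
          rw [this]
          exact Submodule.smul_mem _ _ (Submodule.mem_span_singleton_self c)
    choose v hv using hline
    have hsupne : (⨆ i, C i) ≠ ⊤ := by
      intro hT
      have hspan : Submodule.span 𝔽 (Set.range v) = ⊤ := by
        rw [eq_top_iff, ← hT]
        refine iSup_le fun p => (hv p).trans ?_
        exact Submodule.span_mono (Set.singleton_subset_iff.mpr ⟨p, rfl⟩)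
      -- rank bound
      have h1 : Module.rank 𝔽 (ℕ → 𝔽) ≤ Cardinal.aleph0 := by
        have := rank_span_le (R := 𝔽) (Set.range v)
        rw [hspan] at this
        have htop : Module.rank 𝔽 (⊤ : Submodule 𝔽 (ℕ → 𝔽)) = Module.rank 𝔽 (ℕ → 𝔽) :=
          rank_top 𝔽 (ℕ → 𝔽)
        calc Module.rank 𝔽 (ℕ → 𝔽) = Module.rank 𝔽 (⊤ : Submodule 𝔽 (ℕ → 𝔽)) := htop.symm
          _ ≤ Cardinal.mk (Set.range v) := this
          _ ≤ Cardinal.aleph0 := by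
              haveI : Countable Idx := inferInstanceAs (Countable (Option {n : ℤ // n ≤ 0}))
              exact Cardinal.mk_le_aleph0_iff.mpr (Set.countable_range v).to_subtype
      have h2 : Cardinal.aleph0 < Module.rank 𝔽 (ℕ → 𝔽) := by
        rw [rank_fun_infinite]
        calc Cardinal.aleph0 < 2 ^ Cardinal.aleph0 := Cardinal.cantor _
          _ ≤ Cardinal.mk 𝔽 ^ Cardinal.aleph0 := by
              apply Cardinal.power_le_power_right
              exact Cardinal.two_le_iff.mpr (exists_pair_ne 𝔽)
          _ = Cardinal.mk (ℕ → 𝔽) := by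
              rw [Cardinal.mk_arrow]
              simp
      exact absurd h1 h2.not_ge
    refine ⟨?_, hsupne⟩
    intro hspan
    apply hsupne
    rw [eq_top_iff, ← hF0, hspan ((⟨0, le_refl 0⟩ : {n : ℤ // n ≤ 0}) : Idx)]
    exact iSup_le fun q => iSup_le fun _ => le_iSup C q
end
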